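/- The tAND nets are redundant for generating AND-OR nets: the substitution closure S(pAND ∪ 11tAND ∪ 11pOR ∪ tOR) equals S(pAND ∪ 11pOR ∪ tOR). -/

import Mathlib

structure Net where
  P : Finset ℕ
  T : Finset ℕ
  F : Finset (ℕ × ℕ)
  I : Finset ℕ
  O : Finset ℕ

namespace Net

def nodes (N : Net) : Finset ℕ := N.P ∪ N.T

def IsPetri (N : Net) : Prop :=
  Disjoint N.P N.T ∧ ∀ e ∈ N.F, (e.1 ∈ N.P ∧ e.2 ∈ N.T) ∨ (e.1 ∈ N.T ∧ e.2 ∈ N.P)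

def edge (N : Net) (x y : ℕ) : Prop := (x, y) ∈ N.F

def pathReach (N : Net) : ℕ → ℕ → Prop := Relation.ReflTransGen N.edge

def Connected (N : Net) : Prop :=
  (∀ x ∈ N.nodes, ∃ i ∈ N.I, N.pathReach i x) ∧
  (∀ x ∈ N.nodes, ∃ o ∈ N.O, N.pathReach x o)

/-- place workflow net -/
def IsPWF (N : Net) : Prop :=
  N.IsPetri ∧ N.I ⊆ N.P ∧ N.O ⊆ N.P ∧ N.I.Nonempty ∧ N.O.Nonempty ∧ N.Connected

/-- transition workflow net -/
def IsTWF (N : Net) : Prop :=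
  N.IsPetri ∧ N.I ⊆ N.T ∧ N.O ⊆ N.T ∧ N.I.Nonempty ∧ N.O.Nonempty ∧ N.Connected

def IsWF (N : Net) : Prop := N.IsPWF ∨ N.IsTWF

abbrev Marking := ℕ → ℕ

def pre (N : Net) (t : ℕ) : Marking := fun p => if (p, t) ∈ N.F then 1 else 0
def post (N : Net) (t : ℕ) : Marking := fun p => if (t, p) ∈ N.F then 1 else 0
def enabled (N : Net) (t : ℕ) (m : Marking) : Prop := t ∈ N.T ∧ N.pre t ≤ m
def fire (N : Net) (t : ℕ) (m : Marking) : Marking := fun p => m p - N.pre t p + N.post t p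
def stepRel (N : Net) (m m' : Marking) : Prop := ∃ t, N.enabled t m ∧ m' = N.fire t m
def reach (N : Net) : Marking → Marking → Prop := Relation.ReflTransGen N.stepRel

/-- the marking with `k` tokens on each element of `S` -/
def bag (k : ℕ) (S : Finset ℕ) : Marking := fun p => if p ∈ S then k else 0

def kSound (N : Net) (k : ℕ) : Prop :=
  ∀ m, N.reach (bag k N.I) m → N.reach m (bag k N.O)

def starSound (N : Net) : Prop := ∀ k, 1 ≤ k → N.kSound k

def subSound (N : Net) : Prop :=
  ∀ k k' : ℕ, k' ≤ k → ∀ m : Marking,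
    N.reach (bag k N.I) (m + bag k' N.O) → N.reach m (bag (k - k') N.O)

/-- place completion of a tWF net -/
def pc (N : Net) (pi po : ℕ) : Net where
  P := insert pi (insert po N.P)
  T := N.T
  F := (N.I.image fun t => (pi, t)) ∪ (N.O.image fun t => (t, po)) ∪ N.F
  I := {pi}
  O := {po}

/-- transition completion of a pWF net -/
def tc (N : Net) (t_i t_o : ℕ) : Net where
  P := N.P
  T := insert t_i (insert t_o N.T)
  F := (N.I.image fun p => (t_i, p)) ∪ (N.O.image fun p => (p, t_o)) ∪ N.F
  I := {t_i}
  O := {t_o}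

/-- *-soundness of a tWF net: its place completion (for fresh names) is *-sound -/
def tStarSound (N : Net) : Prop :=
  ∀ pi po : ℕ, pi ∉ N.nodes → po ∉ N.nodes → pi ≠ po → (N.pc pi po).starSound

/-- sub-soundness of a tWF net: its place completion (for fresh names) is sub-sound -/
def tSubSound (N : Net) : Prop :=
  ∀ pi po : ℕ, pi ∉ N.nodes → po ∉ N.nodes → pi ≠ po → (N.pc pi po).subSound

/-- preset of a node, as a finset -/
def inEdges (N : Net) (n : ℕ) : Finset ℕ := (N.F.filter fun e => e.2 = n).image Prod.fst
/-- postset of a node, as a finset -/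
def outEdges (N : Net) (n : ℕ) : Finset ℕ := (N.F.filter fun e => e.1 = n).image Prod.snd

/-- substitution of the node `n` of `N` by the net `M` (place or transition substitution,
depending on the type of `n`): each input node of `M` inherits the preset of `n`, each
output node of `M` inherits the postset of `n`. -/
def subst (N : Net) (n : ℕ) (M : Net) : Net where
  P := (N.P.erase n) ∪ M.P
  T := (N.T.erase n) ∪ M.T
  F := (N.F.filter fun e => e.1 ≠ n ∧ e.2 ≠ n) ∪ M.F
        ∪ (N.inEdges n ×ˢ M.I) ∪ (M.O ×ˢ N.outEdges n)
  I := if n ∈ N.I then (N.I.erase n) ∪ M.I else N.I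
  O := if n ∈ N.O then (N.O.erase n) ∪ M.O else N.O

def Acyclic (N : Net) : Prop := ∀ x, ¬ Relation.TransGen N.edge x x

/-- AND net condition (on top of being a WF net) -/
def IsAND (N : Net) : Prop :=
  N.Acyclic ∧ ∀ p ∈ N.P,
    ((p ∈ N.I ∧ (N.inEdges p).card = 0) ∨ (p ∉ N.I ∧ (N.inEdges p).card = 1)) ∧
    ((p ∈ N.O ∧ (N.outEdges p).card = 0) ∨ (p ∉ N.O ∧ (N.outEdges p).card = 1))

/-- OR net condition (on top of being a WF net) -/
def IsOR (N : Net) : Prop :=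
  ∀ t ∈ N.T,
    ((t ∈ N.I ∧ (N.inEdges t).card = 0) ∨ (t ∉ N.I ∧ (N.inEdges t).card = 1)) ∧
    ((t ∈ N.O ∧ (N.outEdges t).card = 0) ∨ (t ∉ N.O ∧ (N.outEdges t).card = 1))

end Net
/-- substitution closure of a class of nets -/
inductive SClos (C : Net → Prop) : Net → Prop
  | base (N : Net) : C N → SClos C N
  | substP (N M : Net) (p : ℕ) : SClos C N → SClos C M → M.IsPWF → p ∈ N.P →
      Disjoint N.nodes M.nodes → SClos C (N.subst p M)
  | substT (N M : Net) (t : ℕ) : SClos C N → SClos C M → M.IsTWF → t ∈ N.T →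
      Disjoint N.nodes M.nodes → SClos C (N.subst t M)

def pANDClass (N : Net) : Prop := N.IsPWF ∧ N.IsAND
def tAND11Class (N : Net) : Prop := N.IsTWF ∧ N.IsAND ∧ N.I.card = 1 ∧ N.O.card = 1
def pOR11Class (N : Net) : Prop := N.IsPWF ∧ N.IsOR ∧ N.I.card = 1 ∧ N.O.card = 1
def tORClass (N : Net) : Prop := N.IsTWF ∧ N.IsOR

/-!
In a one-input one-output tAND net with input transition `i` and output transition `o`,
acyclicity and connectedness force that no arc enters `i` and none leaves `o`. If `i = o` the net
is that single transition, a tOR net. Otherwise deleting `i` and `o` leaves a pAND net (its inputs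
are the places after `i`, its outputs the places before `o`), and substituting it for the place `q`
of the tOR net `i → q → o` gives back the original net.
-/

attribute [ext] Net

lemma Finset.card_erase_cases_of_card_eq_one {α : Type*} [DecidableEq α] {s : Finset α}
    (hs : s.card = 1) (a : α) :
    (a ∈ s ∧ (s.erase a).card = 0) ∨ (a ∉ s ∧ (s.erase a).card = 1) := by
  by_cases ha : a ∈ s
  · exact .inl ⟨ha, by rw [Finset.card_erase_of_mem ha, hs]⟩
  · exact .inr ⟨ha, by rw [Finset.erase_eq_of_notMem ha, hs]⟩

namespace SClos

variable {C D : Net → Prop}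

theorem le_of_le_sClos (h : C ≤ SClos D) : SClos C ≤ SClos D := by
  intro N hN
  induction hN with
  | base N hN => exact h N hN
  | substP N M p _ _ hM hp hd ihN ihM => exact substP N M p ihN ihM hM hp hd
  | substT N M t _ _ hM ht hd ihN ihM => exact substT N M t ihN ihM hM ht hd

theorem mono (h : C ≤ D) : SClos C ≤ SClos D :=
  le_of_le_sClos fun N hN => base N (h N hN)

end SClos

namespace Net

variable {N : Net} {a b i o q x : ℕ}

@[simp]
lemma mem_inEdges : a ∈ N.inEdges b ↔ (a, b) ∈ N.F := by
  simp [inEdges]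

@[simp]
lemma mem_outEdges : b ∈ N.outEdges a ↔ (a, b) ∈ N.F := by
  simp [outEdges]

lemma IsPetri.mem_nodes_of_mem_F (hN : N.IsPetri) (h : (a, b) ∈ N.F) :
    a ∈ N.nodes ∧ b ∈ N.nodes := by
  rcases hN.2 _ h with ⟨ha, hb⟩ | ⟨ha, hb⟩ <;> simp [nodes, ha, hb]

lemma Connected.pathReach_of_I_eq (hc : N.Connected) (hI : N.I = {i}) (hx : x ∈ N.nodes) :
    N.pathReach i x := by
  obtain ⟨j, hj, h⟩ := hc.1 x hx
  rw [hI, Finset.mem_singleton] at hj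
  exact hj ▸ h

lemma Connected.pathReach_of_O_eq (hc : N.Connected) (hO : N.O = {o}) (hx : x ∈ N.nodes) :
    N.pathReach x o := by
  obtain ⟨j, hj, h⟩ := hc.2 x hx
  rw [hO, Finset.mem_singleton] at hj
  exact hj ▸ h

lemma Acyclic.notMem_F_into_source (hacyc : N.Acyclic) (hP : N.IsPetri) (hc : N.Connected)
    (hI : N.I = {i}) (x : ℕ) : (x, i) ∉ N.F := fun h =>
  hacyc i (.tail' (hc.pathReach_of_I_eq hI (hP.mem_nodes_of_mem_F h).1) h)

lemma Acyclic.notMem_F_out_of_sink (hacyc : N.Acyclic) (hP : N.IsPetri) (hc : N.Connected)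
    (hO : N.O = {o}) (x : ℕ) : (o, x) ∉ N.F := fun h =>
  hacyc o (.head' h (hc.pathReach_of_O_eq hO (hP.mem_nodes_of_mem_F h).2))

lemma Acyclic.isOR_of_I_eq_O (hacyc : N.Acyclic) (hN : N.IsTWF) (hI : N.I = {i})
    (hO : N.O = {i}) : N.IsOR := by
  obtain ⟨hP, -, -, -, -, hc⟩ := hN
  intro t ht
  have htn : t ∈ N.nodes := Finset.mem_union_right _ ht
  obtain rfl : t = i := by
    rcases Relation.reflTransGen_iff_eq_or_transGen.mp (hc.pathReach_of_O_eq hO htn) with h | h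
    · exact h.symm
    · exact (hacyc i (Relation.TransGen.trans_right (hc.pathReach_of_I_eq hI htn) h)).elim
  refine ⟨.inl ⟨by simp [hI], ?_⟩, .inl ⟨by simp [hO], ?_⟩⟩
  · exact Finset.card_eq_zero.mpr (Finset.eq_empty_of_forall_notMem fun x hx =>
      hacyc.notMem_F_into_source hP hc hI x (mem_inEdges.mp hx))
  · exact Finset.card_eq_zero.mpr (Finset.eq_empty_of_forall_notMem fun x hx =>
      hacyc.notMem_F_out_of_sink hP hc hO x (mem_outEdges.mp hx))

def chain (i q o : ℕ) : Net where
  P := {q}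
  T := {i, o}
  F := {(i, q), (q, o)}
  I := {i}
  O := {o}

lemma chain_isTWF (hqi : q ≠ i) (hqo : q ≠ o) : (chain i q o).IsTWF := by
  have hiq : (chain i q o).edge i q := by simp [edge, chain]
  have hqo' : (chain i q o).edge q o := by simp [edge, chain]
  have hnodes : ∀ x ∈ (chain i q o).nodes, x = q ∨ x = i ∨ x = o := by simp [nodes, chain]
  refine ⟨⟨by simp [chain, hqi, hqo], by simp [chain]⟩, by simp [chain], by simp [chain],
    by simp [chain], by simp [chain], fun x hx => ⟨i, by simp [chain], ?_⟩,
    fun x hx => ⟨o, by simp [chain], ?_⟩⟩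
  · rcases hnodes x hx with rfl | rfl | rfl
    exacts [.single hiq, .refl, .head hiq (.single hqo')]
  · rcases hnodes x hx with rfl | rfl | rfl
    exacts [.single hqo', .head hiq (.single hqo'), .refl]

lemma chain_isOR (hio : i ≠ o) (hqi : q ≠ i) (hqo : q ≠ o) : (chain i q o).IsOR := by
  simp [IsOR, chain, inEdges, outEdges, Finset.filter_insert, Finset.filter_singleton, hio,
    hio.symm, hqi, hqo]

def interior (N : Net) (i o : ℕ) : Net where
  P := N.P
  T := (N.T.erase o).erase i
  F := N.F.filter fun e => e.1 ≠ i ∧ e.2 ≠ o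
  I := N.outEdges i
  O := N.inEdges o

@[simp]
lemma mem_interior_F :
    (a, b) ∈ (N.interior i o).F ↔ (a, b) ∈ N.F ∧ a ≠ i ∧ b ≠ o := by
  simp [interior]

lemma inEdges_interior (ho : x ≠ o) : (N.interior i o).inEdges x = (N.inEdges x).erase i := by
  ext a
  simp [ho, and_comm]

lemma outEdges_interior (hi : x ≠ i) : (N.interior i o).outEdges x = (N.outEdges x).erase o := by
  ext b
  simp [hi, and_comm]

lemma pathReach_interior (hsrc : ∀ x, (x, i) ∉ N.F) (hsnk : ∀ y, (o, y) ∉ N.F)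
    (h : N.pathReach a x) (ha : a ≠ i) (hx : x ≠ o) : (N.interior i o).pathReach a x := by
  induction h using Relation.ReflTransGen.head_induction_on with
  | refl => exact .refl
  | @head a c hac hcx ih =>
    have hci : c ≠ i := by rintro rfl; exact hsrc a hac
    have hco : c ≠ o := by
      rintro rfl
      rcases hcx.cases_head with h | ⟨d, hd, -⟩
      · exact hx h.symm
      · exact hsnk d hd
    exact .head (mem_interior_F.mpr ⟨hac, ha, hco⟩) (ih hci)

lemma mem_nodes_of_mem_nodes_interior (hiP : i ∉ N.P) (hoP : o ∉ N.P)
    (hx : x ∈ (N.interior i o).nodes) : x ∈ N.nodes ∧ x ≠ i ∧ x ≠ o := by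
  simp only [nodes, interior, Finset.mem_union, Finset.mem_erase] at hx ⊢
  rcases hx with hx | ⟨hxi, hxo, hx⟩
  · exact ⟨.inl hx, by rintro rfl; exact hiP hx, by rintro rfl; exact hoP hx⟩
  · exact ⟨.inr hx, hxi, hxo⟩

lemma Acyclic.interior_isPetri (hacyc : N.Acyclic) (hP : N.IsPetri) (hc : N.Connected)
    (hI : N.I = {i}) (hO : N.O = {o}) : (N.interior i o).IsPetri := by
  refine ⟨hP.1.mono_right ((Finset.erase_subset _ _).trans (Finset.erase_subset _ _)), ?_⟩
  rintro ⟨a, b⟩ he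
  obtain ⟨he, hai, hbo⟩ := mem_interior_F.mp he
  have hbi : b ≠ i := fun h => hacyc.notMem_F_into_source hP hc hI a (h ▸ he)
  have hao : a ≠ o := fun h => hacyc.notMem_F_out_of_sink hP hc hO b (h ▸ he)
  rcases hP.2 _ he with ⟨ha, hb⟩ | ⟨ha, hb⟩
  · exact .inl ⟨ha, by simp [interior, hb, hbi, hbo]⟩
  · exact .inr ⟨by simp [interior, ha, hai, hao], hb⟩

lemma Acyclic.interior_connected (hacyc : N.Acyclic) (hP : N.IsPetri) (hc : N.Connected)
    (hI : N.I = {i}) (hO : N.O = {o}) (hiP : i ∉ N.P) (hoP : o ∉ N.P) :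
    (N.interior i o).Connected := by
  have hsrc := hacyc.notMem_F_into_source hP hc hI
  have hsnk := hacyc.notMem_F_out_of_sink hP hc hO
  constructor
  · intro x hx
    obtain ⟨hx, hxi, hxo⟩ := mem_nodes_of_mem_nodes_interior hiP hoP hx
    rcases (hc.pathReach_of_I_eq hI hx).cases_head with h | ⟨c, hic, hcx⟩
    · exact absurd h.symm hxi
    · have hci : c ≠ i := fun h => hsrc i (h ▸ hic)
      exact ⟨c, mem_outEdges.mpr hic, pathReach_interior hsrc hsnk hcx hci hxo⟩
  · intro x hx
    obtain ⟨hx, hxi, hxo⟩ := mem_nodes_of_mem_nodes_interior hiP hoP hx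
    rcases (hc.pathReach_of_O_eq hO hx).cases_tail with h | ⟨c, hxc, hco⟩
    · exact absurd h.symm hxo
    · have hco' : c ≠ o := fun h => hsnk o (h ▸ hco)
      exact ⟨c, mem_inEdges.mpr hco, pathReach_interior hsrc hsnk hxc hxi hco'⟩

lemma Acyclic.interior_isPWF (hacyc : N.Acyclic) (hN : N.IsTWF) (hI : N.I = {i})
    (hO : N.O = {o}) (hio : i ≠ o) : (N.interior i o).IsPWF := by
  obtain ⟨hP, hIT, hOT, -, -, hc⟩ := hN
  have hiT : i ∈ N.T := hIT (by simp [hI])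
  have hoT : o ∈ N.T := hOT (by simp [hO])
  have hiP : i ∉ N.P := Finset.disjoint_right.mp hP.1 hiT
  have hoP : o ∉ N.P := Finset.disjoint_right.mp hP.1 hoT
  refine ⟨hacyc.interior_isPetri hP hc hI hO, fun p hp => ?_, fun p hp => ?_, ?_, ?_,
    hacyc.interior_connected hP hc hI hO hiP hoP⟩
  · rcases hP.2 _ (mem_outEdges.mp hp) with ⟨h, -⟩ | ⟨-, h⟩
    · exact absurd h hiP
    · exact h
  · rcases hP.2 _ (mem_inEdges.mp hp) with ⟨h, -⟩ | ⟨-, h⟩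
    · exact h
    · exact absurd h hoP
  · have hreach := hc.pathReach_of_O_eq hO (Finset.mem_union_right _ hiT)
    rcases hreach.cases_head with h | ⟨c, h, -⟩
    · exact absurd h hio
    · exact ⟨c, mem_outEdges.mpr h⟩
  · have hreach := hc.pathReach_of_I_eq hI (Finset.mem_union_right _ hoT)
    rcases hreach.cases_tail with h | ⟨c, -, h⟩
    · exact absurd h.symm hio
    · exact ⟨c, mem_inEdges.mpr h⟩

lemma Acyclic.interior (hacyc : N.Acyclic) : (N.interior i o).Acyclic := fun x hx =>
  hacyc x (Relation.TransGen.mono (fun _ _ h => (mem_interior_F.mp h).1) x x hx)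

lemma IsAND.interior (hAND : N.IsAND) (hN : N.IsTWF) (hI : N.I = {i}) (hO : N.O = {o}) :
    (N.interior i o).IsAND := by
  obtain ⟨⟨hPT, -⟩, hIT, hOT, -⟩ := hN
  refine ⟨hAND.1.interior, fun p hp => ?_⟩
  have hpT : p ∉ N.T := Finset.disjoint_left.mp hPT hp
  have hpi : p ≠ i := fun h => hpT (hIT (by simp [hI, h]))
  have hpo : p ≠ o := fun h => hpT (hOT (by simp [hO, h]))
  obtain ⟨hin, hout⟩ := hAND.2 p hp
  have hin1 : (N.inEdges p).card = 1 := by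
    rcases hin with ⟨h, -⟩ | ⟨-, h⟩
    · exact absurd (hIT h) hpT
    · exact h
  have hout1 : (N.outEdges p).card = 1 := by
    rcases hout with ⟨h, -⟩ | ⟨-, h⟩
    · exact absurd (hOT h) hpT
    · exact h
  have hpI : p ∈ (N.interior i o).I ↔ i ∈ N.inEdges p := by simp [Net.interior]
  have hpO : p ∈ (N.interior i o).O ↔ o ∈ N.outEdges p := by simp [Net.interior]
  rw [hpI, hpO, inEdges_interior hpo, outEdges_interior hpi]
  exact ⟨Finset.card_erase_cases_of_card_eq_one hin1 i,
    Finset.card_erase_cases_of_card_eq_one hout1 o⟩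

lemma chain_subst_interior (hiT : i ∈ N.T) (hoT : o ∈ N.T) (hI : N.I = {i}) (hO : N.O = {o})
    (hqi : q ≠ i) (hqo : q ≠ o) : (chain i q o).subst q (N.interior i o) = N := by
  ext x
  · simp [subst, chain, Net.interior]
  · simp only [subst, chain, Net.interior, Finset.mem_union, Finset.mem_erase, Finset.mem_insert,
      Finset.mem_singleton]
    grind
  · obtain ⟨a, b⟩ := x
    simp [subst, chain, Net.interior, hqi, hqo]
    grind
  · simp [subst, chain, hI, hqi]
  · simp [subst, chain, hO, hqo]

lemma disjoint_chain_interior (hiP : i ∉ N.P) (hoP : o ∉ N.P) (hq : q ∉ N.nodes) :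
    Disjoint (chain i q o).nodes (N.interior i o).nodes := by
  refine Finset.disjoint_right.mpr fun x hx hxc => ?_
  obtain ⟨hx, hxi, hxo⟩ := mem_nodes_of_mem_nodes_interior hiP hoP hx
  simp only [nodes, chain, Finset.mem_union, Finset.mem_insert, Finset.mem_singleton] at hxc
  rcases hxc with rfl | rfl | rfl
  exacts [hq hx, hxi rfl, hxo rfl]

end Net

theorem tAND11Class.sClos_pAND_pOR11_tOR {N : Net} (h : tAND11Class N) :
    SClos (fun N => pANDClass N ∨ pOR11Class N ∨ tORClass N) N := by
  obtain ⟨hN, hAND, hI1, hO1⟩ := h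
  obtain ⟨i, hI⟩ := Finset.card_eq_one.mp hI1
  obtain ⟨o, hO⟩ := Finset.card_eq_one.mp hO1
  rcases eq_or_ne i o with rfl | hio
  · exact .base N (.inr (.inr ⟨hN, hAND.1.isOR_of_I_eq_O hN hI hO⟩))
  have hiT : i ∈ N.T := hN.2.1 (by simp [hI])
  have hoT : o ∈ N.T := hN.2.2.1 (by simp [hO])
  have hiP : i ∉ N.P := Finset.disjoint_right.mp hN.1.1 hiT
  have hoP : o ∉ N.P := Finset.disjoint_right.mp hN.1.1 hoT
  obtain ⟨q, hq⟩ := Infinite.exists_notMem_finset N.nodes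
  have hqi : q ≠ i := fun h => hq (h ▸ Finset.mem_union_right _ hiT)
  have hqo : q ≠ o := fun h => hq (h ▸ Finset.mem_union_right _ hoT)
  have hM := hAND.1.interior_isPWF hN hI hO hio
  rw [← Net.chain_subst_interior hiT hoT hI hO hqi hqo]
  have hchain : tORClass (Net.chain i q o) :=
    ⟨Net.chain_isTWF hqi hqo, Net.chain_isOR hio hqi hqo⟩
  exact .substP _ _ q (.base _ (.inr (.inr hchain)))
    (.base _ (.inl ⟨hM, hAND.interior hN hI hO⟩)) hM (by simp [Net.chain])
    (Net.disjoint_chain_interior hiP hoP hq)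

theorem stmt7 :
    SClos (fun N => pANDClass N ∨ tAND11Class N ∨ pOR11Class N ∨ tORClass N)
      = SClos (fun N => pANDClass N ∨ pOR11Class N ∨ tORClass N) := by
  refine le_antisymm (SClos.le_of_le_sClos ?_) (SClos.mono ?_)
  · rintro N (h | h | h | h)
    exacts [.base N (.inl h), h.sClos_pAND_pOR11_tOR, .base N (.inr (.inl h)),
      .base N (.inr (.inr h))]
  · rintro N (h | h | h)
    exacts [.inl h, .inr (.inr (.inl h)), .inr (.inr (.inr h))]
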